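/- Let V be a graded Lie algebra of degree n over a commutative ring R with 2 invertible, and let d ∈ V be a homogeneous element such that n+|d| is odd and [d,d] = 0. Then both maps a ↦ [d,a] and a ↦ [a,d] are morphisms from V equipped with the derived bracket [a,b]_d = [[a,d],b] to V equipped with the original bracket: [d,[a,b]_d] = [[d,a],[d,b]] and [[a,b]_d, d] = [[a,d],[b,d]] for all homogeneous a,b ∈ V. -/

import Mathlib

/-- `(-1)^m` as an integer, for `m : ℤ` (depends only on the parity of `m`). -/
def gsign (m : ℤ) : ℤ := (((-1 : ℤˣ) ^ m : ℤˣ) : ℤ)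

/-- A graded Lie algebra of degree `n` over a commutative ring `R`: a `ℤ`-graded
`R`-module with an `R`-bilinear bracket sending `V_i × V_j` into `V_{i+j+n}`,
graded skew-symmetric and satisfying the graded Jacobi identity. -/
structure GradedLieAlgebraDeg (R : Type*) [CommRing R] (V : Type*) [AddCommGroup V] [Module R V]
    (n : ℤ) where
  grade : ℤ → Submodule R V
  bracket : V →ₗ[R] V →ₗ[R] V
  bracket_mem : ∀ i j : ℤ, ∀ a ∈ grade i, ∀ b ∈ grade j, bracket a b ∈ grade (i + j + n)
  skew : ∀ i j : ℤ, ∀ a ∈ grade i, ∀ b ∈ grade j,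
    bracket a b = - (gsign ((n + i) * (n + j)) • bracket b a)
  jacobi : ∀ i j l : ℤ, ∀ a ∈ grade i, ∀ b ∈ grade j, ∀ c ∈ grade l,
    bracket a (bracket b c)
      = bracket (bracket a b) c + gsign ((n + i) * (n + j)) • bracket b (bracket a c)

/-- `D` is a differential of odd degree `k` on the graded Lie algebra `L`:
homogeneous of odd degree `k`, of square zero, and a graded derivation of the bracket. -/
structure GradedLieAlgebraDeg.IsDifferential {R : Type*} [CommRing R] {V : Type*} [AddCommGroup V]
    [Module R V] {n : ℤ} (L : GradedLieAlgebraDeg R V n) (D : V →ₗ[R] V) (k : ℤ) : Prop where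
  odd : Odd k
  map_mem : ∀ i : ℤ, ∀ a ∈ L.grade i, D a ∈ L.grade (i + k)
  sq_zero : ∀ a : V, D (D a) = 0
  leibniz : ∀ i j : ℤ, ∀ a ∈ L.grade i, ∀ b ∈ L.grade j,
    D (L.bracket a b) = L.bracket (D a) b + gsign (k * (n + i)) • L.bracket a (D b)

/-- The derived bracket `[a,b]_{(D)} = (-1)^{n+|a|+1} • [D a, b]`, for `a` homogeneous
of degree `i`. -/
def GradedLieAlgebraDeg.der {R : Type*} [CommRing R] {V : Type*} [AddCommGroup V] [Module R V]
    {n : ℤ} (L : GradedLieAlgebraDeg R V n) (D : V →ₗ[R] V) (i : ℤ) (a b : V) : V :=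
  gsign (n + i + 1) • L.bracket (D a) b

/-- The derived bracket `[a,b]_d = [[a,d],b]` by an element `d`. -/
def GradedLieAlgebraDeg.derEl {R : Type*} [CommRing R] {V : Type*} [AddCommGroup V] [Module R V]
    {n : ℤ} (L : GradedLieAlgebraDeg R V n) (d : V) (a b : V) : V :=
  L.bracket (L.bracket a d) b

lemma gsign_even {m : ℤ} (h : Even m) : gsign m = 1 := by
  obtain ⟨k, hk⟩ := h
  subst hk
  unfold gsign
  rw [show k + k = (2:ℤ)*k by ring, zpow_mul]
  norm_num [zpow_two, one_zpow]

lemma gsign_odd {m : ℤ} (h : Odd m) : gsign m = -1 := by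
  obtain ⟨k, hk⟩ := h
  subst hk
  unfold gsign
  rw [zpow_add, zpow_mul]
  norm_num [zpow_two, one_zpow]

lemma gsign_add (x y : ℤ) : gsign (x + y) = gsign x * gsign y := by
  unfold gsign
  rw [zpow_add]
  push_cast
  ring

lemma half_cancel {R : Type*} [CommRing R] [Invertible (2 : R)] {V : Type*} [AddCommGroup V]
    [Module R V] {x : V} (h : x + x = 0) : x = 0 := by
  have h2 : (2:R) • x = 0 := by rw [two_smul]; exact h
  calc x = (⅟(2:R) * 2) • x := by rw [invOf_mul_self, one_smul]
    _ = ⅟(2:R) • ((2:R) • x) := by rw [mul_smul]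
    _ = 0 := by rw [h2, smul_zero]

/-- both `a ↦ [d,a]` and `a ↦ [a,d]` are morphisms from the derived
bracket `[a,b]_d = [[a,d],b]` to the original bracket:
`[d,[a,b]_d] = [[d,a],[d,b]]` and `[[a,b]_d, d] = [[a,d],[b,d]]`. -/
theorem interior_derivations_are_morphisms {R : Type*} [CommRing R]
    [Invertible (2 : R)] {V : Type*} [AddCommGroup V] [Module R V] {n : ℤ}
    (L : GradedLieAlgebraDeg R V n) (d : V) (dd : ℤ) (hd : d ∈ L.grade dd)
    (hodd : Odd (n + dd)) (hdd : L.bracket d d = 0) :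
    ∀ i j : ℤ, ∀ a ∈ L.grade i, ∀ b ∈ L.grade j,
      L.bracket d (L.derEl d a b) = L.bracket (L.bracket d a) (L.bracket d b) ∧
      L.bracket (L.derEl d a b) d = L.bracket (L.bracket a d) (L.bracket b d) := by
  intro i j a ha b hb
  have hda : L.bracket d a ∈ L.grade (dd + i + n) := L.bracket_mem dd i d hd a ha
  have had : L.bracket a d ∈ L.grade (i + dd + n) := L.bracket_mem i dd a ha d hd
  -- [d,[d,a]] = 0
  have hA : L.bracket d (L.bracket d a) = 0 := by
    have j1 := L.jacobi dd dd i d hd d hd a ha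
    rw [hdd, gsign_odd (hodd.mul hodd)] at j1
    simp only [map_zero, LinearMap.zero_apply, zero_add, neg_smul, one_smul] at j1
    exact half_cancel (R := R) (by nth_rewrite 1 [j1]; exact neg_add_cancel _)
  -- [[d,a],d] = 0
  have hB : L.bracket (L.bracket d a) d = 0 := by
    rw [L.skew (dd + i + n) dd _ hda d hd, hA, smul_zero, neg_zero]
  -- [d,[a,d]] = 0
  have hC : L.bracket d (L.bracket a d) = 0 := by
    have j1 := L.jacobi dd i dd d hd a ha d hd
    rw [hdd, hB] at j1
    simpa using j1
  -- main Jacobi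
  have j2 := L.jacobi dd (i + dd + n) j d hd (L.bracket a d) had b hb
  rw [hC, map_zero, LinearMap.zero_apply, zero_add] at j2
  have sk := L.skew i dd a ha d hd
  have skb := L.skew dd j d hd b hb
  have expand : ∀ (s : ℤ) (x y : V), L.bracket (-(s • x)) y = -(s • L.bracket x y) := by
    intro s x y
    rw [map_neg, map_zsmul, LinearMap.neg_apply, LinearMap.smul_apply]
  constructor
  · show L.bracket d (L.bracket (L.bracket a d) b) = _
    rw [j2, sk, expand, smul_neg, smul_smul]
    have : gsign ((n + dd) * (n + (i + dd + n))) * gsign ((n + i) * (n + dd)) = -1 := by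
      rw [← gsign_add]
      apply gsign_odd
      rw [show (n + dd) * (n + (i + dd + n)) + (n + i) * (n + dd)
          = (n + dd) * (3 * n + 2 * i + dd) by ring]
      exact hodd.mul (by rw [Int.odd_iff] at hodd ⊢; omega)
    rw [this, neg_smul, one_smul, neg_neg]
  · have hmem : L.derEl d a b ∈ L.grade (i + dd + n + j + n) :=
      L.bracket_mem (i + dd + n) j _ had b hb
    rw [L.skew (i + dd + n + j + n) dd _ hmem d hd]
    show -(_ • L.bracket d (L.bracket (L.bracket a d) b)) = _
    rw [j2, skb, map_neg, map_zsmul, smul_neg, smul_neg, neg_neg, smul_smul, smul_smul]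
    have : gsign ((n + (i + dd + n + j + n)) * (n + dd)) *
        gsign ((n + dd) * (n + (i + dd + n))) * gsign ((n + dd) * (n + j)) = 1 := by
      rw [← gsign_add, ← gsign_add]
      apply gsign_even
      exact ⟨(n + dd) * (3 * n + i + j + dd), by ring⟩
    rw [this, one_smul]
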